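/- arXiv:1612.06120 — 2 statements merged into one kernel-verified Lean document; each statement's English description precedes it below -/
import Mathlib

section
/- Consider a star network matrix A ∈ ℝ^{n×n} with A_{1j} = a_{1j} and A_{j1} = a_{j1} for j = 2,…,n, diagonal entries a_{ii}, and all other off-diagonal entries zero; output C = e₁^T. Suppose x ∈ ℂ^n with ‖x‖ = 1, x₁ = 0, and (A+Δ)x = λx for some λ ∈ ℂ and some Δ supported on the star pattern. If the support of (x₂,…,x_n) is a singleton {i}, then necessarily Δ_{1,i} = −a_{1,i} and λ = a_{ii} + Δ_{ii}. -/
namespace Matrix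

variable {ι R : Type*} [Fintype ι]

theorem mulVec_apply_of_forall_ne_eq_zero [NonUnitalNonAssocSemiring R] (M : Matrix ι ι R)
    {x : ι → R} {j : ι} (hx : ∀ k, k ≠ j → x k = 0) (i : ι) :
    (M *ᵥ x) i = M i j * x j :=
  Finset.sum_eq_single j (fun k _ hk => by rw [hx k hk, mul_zero])
    (fun hj => absurd (Finset.mem_univ j) hj)

section Eigenvector

variable [CommRing R] {M : Matrix ι ι R} {x : ι → R} {lam : R} {j : ι}

theorem entry_mul_eq_of_mulVec_eq_smul (heig : M *ᵥ x = lam • x)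
    (hx : ∀ k, k ≠ j → x k = 0) (i : ι) : M i j * x j = lam * x i := by
  rw [← mulVec_apply_of_forall_ne_eq_zero M hx, heig, Pi.smul_apply, smul_eq_mul]

variable [NoZeroDivisors R]

theorem entry_eq_zero_of_mulVec_eq_smul (heig : M *ᵥ x = lam • x)
    (hx : ∀ k, k ≠ j → x k = 0) (hxj : x j ≠ 0) {i : ι} (hxi : x i = 0) : M i j = 0 := by
  have h := entry_mul_eq_of_mulVec_eq_smul heig hx i
  rw [hxi, mul_zero] at h
  exact (mul_eq_zero.mp h).resolve_right hxj

theorem eigenvalue_eq_diag_of_mulVec_eq_smul (heig : M *ᵥ x = lam • x)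
    (hx : ∀ k, k ≠ j → x k = 0) (hxj : x j ≠ 0) : lam = M j j :=
  (mul_right_cancel₀ hxj (entry_mul_eq_of_mulVec_eq_smul heig hx j)).symm

end Eigenvector

end Matrix

/-- For a star network (nonzero entries only on the first row,
first column and diagonal), a perturbed eigenvector with unit norm, first
component zero, and support `{i₀}` among the non-hub entries forces
`Δ_{1,i₀} = −a_{1,i₀}` and `λ = a_{i₀i₀} + Δ_{i₀i₀}`. -/
theorem star_network_singleton_support (n : ℕ) (hn : 3 ≤ n)
    (A Δ : Matrix (Fin n) (Fin n) ℝ)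
    (lam : ℂ) (x : Fin n → ℂ)
    (hx0 : x ⟨0, by omega⟩ = 0)
    (heig : ((A + Δ).map (Complex.ofReal)).mulVec x = lam • x)
    (i₀ : Fin n)
    (hsupp : ∀ j : Fin n, x j ≠ 0 ↔ j = i₀) :
    Δ ⟨0, by omega⟩ i₀ = -A ⟨0, by omega⟩ i₀ ∧
      lam = Complex.ofReal (A i₀ i₀ + Δ i₀ i₀) := by
  have hxi₀ : x i₀ ≠ 0 := (hsupp i₀).mpr rfl
  have hoff : ∀ k, k ≠ i₀ → x k = 0 := fun k hk => not_not.mp (mt (hsupp k).mp hk)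
  refine ⟨?_, Matrix.eigenvalue_eq_diag_of_mulVec_eq_smul heig hoff hxi₀⟩
  have hcol : ((A + Δ) ⟨0, by omega⟩ i₀ : ℂ) = 0 :=
    Matrix.entry_eq_zero_of_mulVec_eq_smul heig hoff hxi₀ hx0
  rw [Complex.ofReal_eq_zero, Matrix.add_apply] at hcol
  linarith
end

section
/- Let α and γ be independent nonnegative random variables with survival functions Pr(α ≥ x) = (1−x)^{n−1} on [0,1] and Pr(γ ≥ x) = (1−(n−2)√2 x)^{n−1} on [0, 1/(√2(n−2))]. Then δ = min{α, γ} satisfies 1/(√2 n(n−1)) ≤ 𝔼[δ] ≤ 1/(√2 n(n−2)) for n ≥ 3. -/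
/-!
By the layer-cake formula and independence, with `c = √2 (n - 2)`,
`𝔼[δ] = ∫₀^{1/c} (1 - t)^{n-1} (1 - c t)^{n-1} dt`.
Dropping the factor `(1 - t)^{n-1} ≤ 1` gives `1/(c n)`; bounding the product below by
`(1 - (1 + c) t)^{n-1}` on `[0, 1/(1 + c)]` gives `1/((1 + c) n)`, and `1 + c ≤ √2 (n - 1)`.
-/

open MeasureTheory ProbabilityTheory Set

theorem integral_Ioc_one_sub_mul_pow {k : ℝ} (hk : 0 < k) (m : ℕ) :
    ∫ t in Ioc 0 (1 / k), (1 - k * t) ^ m = 1 / (k * (m + 1)) := by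
  rw [← intervalIntegral.integral_of_le (by positivity),
    intervalIntegral.integral_comp_sub_mul (fun x => x ^ m) hk.ne', integral_pow,
    mul_one_div_cancel hk.ne']
  simp [field]

theorem one_sub_mul_nonneg_of_mem_Ioc {c t : ℝ} (hc : 0 < c) (ht : t ∈ Ioc 0 (1 / c)) :
    0 ≤ 1 - c * t := by
  have := mul_le_mul_of_nonneg_left ht.2 hc.le
  rw [mul_one_div_cancel hc.ne'] at this
  linarith

theorem one_sub_nonneg_of_mem_Ioc {c t : ℝ} (hc : 1 ≤ c) (ht : t ∈ Ioc 0 (1 / c)) :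
    0 ≤ 1 - t := by
  have := one_sub_mul_nonneg_of_mem_Ioc (by linarith) ht
  nlinarith [ht.1]

theorem setIntegral_pow_mul_pow_le {c : ℝ} (hc : 1 ≤ c) (m : ℕ) :
    ∫ t in Ioc 0 (1 / c), (1 - t) ^ m * (1 - c * t) ^ m ≤ 1 / (c * (m + 1)) := by
  rw [← integral_Ioc_one_sub_mul_pow (by linarith) m]
  refine setIntegral_mono_on (by fun_prop : Continuous _).integrableOn_Ioc
    (by fun_prop : Continuous _).integrableOn_Ioc measurableSet_Ioc fun t ht => ?_
  have h1 := one_sub_nonneg_of_mem_Ioc hc ht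
  have hc1 := one_sub_mul_nonneg_of_mem_Ioc (by linarith) ht
  exact mul_le_of_le_one_left (by positivity) (pow_le_one₀ h1 (by linarith [ht.1]))

theorem le_setIntegral_pow_mul_pow {c : ℝ} (hc : 1 ≤ c) (m : ℕ) :
    1 / ((1 + c) * (m + 1)) ≤ ∫ t in Ioc 0 (1 / c), (1 - t) ^ m * (1 - c * t) ^ m := by
  have hcont : Continuous fun t : ℝ => (1 - t) ^ m * (1 - c * t) ^ m := by fun_prop
  calc 1 / ((1 + c) * (m + 1)) = ∫ t in Ioc 0 (1 / (1 + c)), (1 - (1 + c) * t) ^ m :=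
        (integral_Ioc_one_sub_mul_pow (by linarith) m).symm
    _ ≤ ∫ t in Ioc 0 (1 / (1 + c)), (1 - t) ^ m * (1 - c * t) ^ m := by
        refine setIntegral_mono_on (by fun_prop : Continuous _).integrableOn_Ioc
          hcont.integrableOn_Ioc measurableSet_Ioc fun t ht => ?_
        rw [← mul_pow]
        refine pow_le_pow_left₀ (one_sub_mul_nonneg_of_mem_Ioc (by linarith) ht) ?_ m
        nlinarith [mul_nonneg (by linarith : 0 ≤ c) (sq_nonneg t)]
    _ ≤ ∫ t in Ioc 0 (1 / c), (1 - t) ^ m * (1 - c * t) ^ m := by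
        refine setIntegral_mono_set hcont.integrableOn_Ioc ?_
          (Ioc_subset_Ioc_right (one_div_le_one_div_of_le (by linarith) (by linarith))).eventuallyLE
        refine (ae_restrict_iff' measurableSet_Ioc).mpr (.of_forall fun t ht => ?_)
        have h1 := one_sub_nonneg_of_mem_Ioc hc ht
        have hc1 := one_sub_mul_nonneg_of_mem_Ioc (by linarith) ht
        positivity

theorem ae_le_of_forall_lt_measure_le_eq_zero {Ω : Type*} [MeasurableSpace Ω] {P : Measure Ω}
    {X : Ω → ℝ} {b : ℝ} (h : ∀ x, b < x → P {ω | x ≤ X ω} = 0) : ∀ᵐ ω ∂P, X ω ≤ b := by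
  have hsub : {ω | ¬ X ω ≤ b} ⊆ ⋃ k : ℕ, {ω | b + 1 / (k + 1) ≤ X ω} := fun ω hω => by
    obtain ⟨k, hk⟩ := exists_nat_one_div_lt (sub_pos.mpr (not_le.mp hω))
    exact mem_iUnion.mpr ⟨k, by simp only [mem_ofPred_eq]; linarith⟩
  exact measure_mono_null hsub (measure_iUnion_null fun k => h _ (lt_add_of_pos_right b (by positivity)))

theorem integral_min_eq_setIntegral_mul_survival {Ω : Type*} [MeasurableSpace Ω]
    {P : Measure Ω} [IsFiniteMeasure P] {α γ : Ω → ℝ} (hα : Measurable α) (hγ : Measurable γ)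
    (hα0 : ∀ ω, 0 ≤ α ω) (hγ0 : ∀ ω, 0 ≤ γ ω) (hind : IndepFun α γ P) {b : ℝ}
    (hγb : ∀ᵐ ω ∂P, γ ω ≤ b) :
    ∫ ω, min (α ω) (γ ω) ∂P = ∫ t in Ioc 0 b, P.real {ω | t ≤ α ω} * P.real {ω | t ≤ γ ω} := by
  have hmin_le : ∀ᵐ ω ∂P, min (α ω) (γ ω) ≤ b := hγb.mono fun ω h => (min_le_right _ _).trans h
  have hint : Integrable (fun ω => min (α ω) (γ ω)) P :=
    (integrable_const b).mono' (hα.min hγ).aestronglyMeasurable <| hmin_le.mono fun ω h => by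
      rwa [Real.norm_of_nonneg (le_min (hα0 ω) (hγ0 ω))]
  rw [hint.integral_eq_integral_Ioc_meas_le (.of_forall fun ω => le_min (hα0 ω) (hγ0 ω)) hmin_le]
  congr 1 with t
  have hset : {ω | t ≤ min (α ω) (γ ω)} = α ⁻¹' Ici t ∩ γ ⁻¹' Ici t := by
    ext ω; simp
  rw [hset, measureReal_def, hind.measure_inter_preimage_eq_mul _ _ measurableSet_Ici
    measurableSet_Ici, ENNReal.toReal_mul]
  rfl

theorem star_radius_expectation_bounds_general {Ω : Type*} [MeasurableSpace Ω]
    (P : Measure Ω) [IsProbabilityMeasure P] (n : ℕ) (hn : 3 ≤ n)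
    (α γ : Ω → ℝ) (hαm : Measurable α) (hγm : Measurable γ)
    (hα0 : ∀ ω, 0 ≤ α ω) (hγ0 : ∀ ω, 0 ≤ γ ω)
    (hindep : IndepFun α γ P)
    (hαsurv : ∀ x : ℝ, 0 ≤ x → x ≤ 1 →
      P {ω | x ≤ α ω} = ENNReal.ofReal ((1 - x) ^ (n - 1)))
    (hγsurv : ∀ x : ℝ, 0 ≤ x → x ≤ 1 / (Real.sqrt 2 * (n - 2)) →
      P {ω | x ≤ γ ω} = ENNReal.ofReal ((1 - (n - 2) * Real.sqrt 2 * x) ^ (n - 1)))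
    (hγsurv' : ∀ x : ℝ, 1 / (Real.sqrt 2 * (n - 2)) < x → P {ω | x ≤ γ ω} = 0)
    (δ : Ω → ℝ) (hδ : ∀ ω, δ ω = min (α ω) (γ ω)) :
    1 / (Real.sqrt 2 * n * (n - 1)) ≤ ∫ ω, δ ω ∂P ∧
      ∫ ω, δ ω ∂P ≤ 1 / (Real.sqrt 2 * n * (n - 2)) := by
  set c := Real.sqrt 2 * (n - 2)
  have hn3 : (3 : ℝ) ≤ n := by exact_mod_cast hn
  have hs2 : 1 ≤ Real.sqrt 2 := Real.one_le_sqrt.mpr (by norm_num)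
  have hc : 1 ≤ c := by nlinarith
  have hm : ((n - 1 : ℕ) : ℝ) + 1 = n := by rw [Nat.cast_sub (by omega)]; ring
  have hE : ∫ ω, δ ω ∂P = ∫ t in Ioc 0 (1 / c), (1 - t) ^ (n - 1) * (1 - c * t) ^ (n - 1) := by
    rw [integral_congr_ae (.of_forall hδ), integral_min_eq_setIntegral_mul_survival hαm hγm hα0
      hγ0 hindep (ae_le_of_forall_lt_measure_le_eq_zero hγsurv')]
    refine setIntegral_congr_fun measurableSet_Ioc fun t ht => ?_
    have h1 := one_sub_nonneg_of_mem_Ioc hc ht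
    have hc1 := one_sub_mul_nonneg_of_mem_Ioc (by linarith) ht
    rw [measureReal_def, measureReal_def, hαsurv t ht.1.le (by linarith), hγsurv t ht.1.le ht.2,
      show (n - 2 : ℝ) * √2 * t = c * t by ring, ENNReal.toReal_ofReal (by positivity),
      ENNReal.toReal_ofReal (by positivity)]
  rw [hE]
  constructor
  · calc 1 / (Real.sqrt 2 * n * (n - 1)) ≤ 1 / ((1 + c) * n) := by
          refine one_div_le_one_div_of_le (by positivity) ?_
          nlinarith [mul_le_mul_of_nonneg_right hs2 (by positivity : (0 : ℝ) ≤ n)]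
      _ ≤ _ := hm ▸ le_setIntegral_pow_mul_pow hc (n - 1)
  · calc _ ≤ 1 / (c * n) := hm ▸ setIntegral_pow_mul_pow_le hc (n - 1)
      _ = 1 / (Real.sqrt 2 * n * (n - 2)) := by ring

/-- For independent nonnegative `α, γ` with survival functions
`(1−x)^{n−1}` on `[0,1]` and `(1−(n−2)√2·x)^{n−1}` on `[0, 1/(√2(n−2))]`,
the minimum `δ = min{α,γ}` satisfies
`1/(√2 n(n−1)) ≤ 𝔼[δ] ≤ 1/(√2 n(n−2))` for `n ≥ 3`. -/
theorem star_radius_expectation_bounds {Ω : Type*} [MeasurableSpace Ω]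
    (P : Measure Ω) [IsProbabilityMeasure P] (n : ℕ) (hn : 3 ≤ n)
    (α γ : Ω → ℝ) (hαm : Measurable α) (hγm : Measurable γ)
    (hα0 : ∀ ω, 0 ≤ α ω) (hγ0 : ∀ ω, 0 ≤ γ ω)
    (hindep : IndepFun α γ P)
    (hαsurv : ∀ x : ℝ, 0 ≤ x → x ≤ 1 →
      P {ω | x ≤ α ω} = ENNReal.ofReal ((1 - x) ^ (n - 1)))
    (hαsurv' : ∀ x : ℝ, 1 < x → P {ω | x ≤ α ω} = 0)
    (hγsurv : ∀ x : ℝ, 0 ≤ x → x ≤ 1 / (Real.sqrt 2 * (n - 2)) →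
      P {ω | x ≤ γ ω} = ENNReal.ofReal ((1 - (n - 2) * Real.sqrt 2 * x) ^ (n - 1)))
    (hγsurv' : ∀ x : ℝ, 1 / (Real.sqrt 2 * (n - 2)) < x → P {ω | x ≤ γ ω} = 0)
    (δ : Ω → ℝ) (hδ : ∀ ω, δ ω = min (α ω) (γ ω)) :
    1 / (Real.sqrt 2 * n * (n - 1)) ≤ ∫ ω, δ ω ∂P ∧
      ∫ ω, δ ω ∂P ≤ 1 / (Real.sqrt 2 * n * (n - 2)) :=
  star_radius_expectation_bounds_general P n hn α γ hαm hγm hα0 hγ0 hindep hαsurv hγsurv hγsurv' δ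
    hδ
end
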